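/- Let τ < θ be reals, let D(t) be a continuous matrix-valued function on [τ,θ] mapping ℝˡ to ℝⁿ, and let Ψ : C([τ,θ], ℝˡ) → ℝⁿ be a linear map satisfying |Ψ(q)| ≤ C_Ψ ‖q‖_{i,τ,θ} for all continuous q, where C_Ψ > 0. Let C_D > 0 be such that ‖Dq‖_{i,τ,θ} ≤ C_D ‖q‖_{i,τ,θ} for all continuous q (e.g. C_D = max_{t∈[τ,θ]} ‖D(t)‖). Suppose the continuous functions Δp and q satisfy |Ψ(Δp)| ≥ β ‖DΔp‖_{i,τ,θ} for some β > 0, together with ‖q‖_{i,τ,θ} ≤ β‖DΔp‖_{i,τ,θ}/(2C_Ψ) and ‖q‖_{i,τ,θ} ≤ ‖DΔp‖_{i,τ,θ}/C_D. Then |Ψ(Δp + q)| ≥ (β/4) ‖D(Δp + q)‖_{i,τ,θ}. -/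

import Mathlib

open Set Filter Asymptotics MeasureTheory

/-- Euclidean norm of a vector in `ℝˡ`. -/
noncomputable def euclNorm {l : ℕ} (v : Fin l → ℝ) : ℝ := Real.sqrt (∑ i, v i ^ 2)

/-- `‖q‖_{i,a,b} = ∫_a^b |q(t)| dt`. -/
noncomputable def intNorm {l : ℕ} (a b : ℝ) (q : ℝ → Fin l → ℝ) : ℝ :=
  ∫ t in a..b, euclNorm (q t)

/-
Write `A = ‖DΔp‖`. The bound on `Ψ` and the first smallness condition give `|Ψ q| ≤ βA/2`,
so `|Ψ(Δp + q)| ≥ βA - βA/2 = βA/2`. The bound on `D` and the second smallness condition give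
`‖Dq‖ ≤ A`, so `‖D(Δp + q)‖ ≤ 2A`, and `(β/4) · 2A = βA/2`.
-/

open Matrix

section EuclNorm

variable {l : ℕ}

theorem euclNorm_eq_norm_toLp (v : Fin l → ℝ) : euclNorm v = ‖WithLp.toLp 2 v‖ := by
  simp [euclNorm, EuclideanSpace.norm_eq, sq_abs]

theorem euclNorm_add_le (v w : Fin l → ℝ) : euclNorm (v + w) ≤ euclNorm v + euclNorm w := by
  simpa only [euclNorm_eq_norm_toLp, WithLp.toLp_add] using norm_add_le _ _

theorem euclNorm_le_euclNorm_add_add (v w : Fin l → ℝ) :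
    euclNorm v ≤ euclNorm (v + w) + euclNorm w := by
  simpa only [euclNorm_eq_norm_toLp, WithLp.toLp_add] using norm_le_add_norm_add _ _

theorem continuous_euclNorm : Continuous (euclNorm (l := l)) := by
  simpa only [funext euclNorm_eq_norm_toLp] using (PiLp.continuous_toLp 2 fun _ : Fin l => ℝ).norm

end EuclNorm

section MatrixFunction

variable {m l : ℕ} {s : Set ℝ} {D : ℝ → Matrix (Fin m) (Fin l) ℝ} {f g : ℝ → Fin l → ℝ}

theorem ContinuousOn.euclNorm_mulVec (hD : ∀ i j, ContinuousOn (fun t => D t i j) s)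
    (hf : ContinuousOn f s) : ContinuousOn (fun t => euclNorm (D t *ᵥ f t)) s := by
  have hD' : ContinuousOn D s := continuousOn_pi.2 fun i => continuousOn_pi.2 (hD i)
  rw [continuousOn_iff_continuous_domRestrict] at hD' hf ⊢
  exact continuous_euclNorm.comp (hD'.matrix_mulVec hf)

theorem integral_euclNorm_mulVec_add_le {a b : ℝ} (hab : a ≤ b)
    (hD : ∀ i j, ContinuousOn (fun t => D t i j) (Icc a b))
    (hf : ContinuousOn f (Icc a b)) (hg : ContinuousOn g (Icc a b)) :
    ∫ t in a..b, euclNorm (D t *ᵥ (f t + g t)) ≤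
      (∫ t in a..b, euclNorm (D t *ᵥ f t)) + ∫ t in a..b, euclNorm (D t *ᵥ g t) := by
  have integrable {h : ℝ → Fin l → ℝ} (hh : ContinuousOn h (Icc a b)) :
      IntervalIntegrable (fun t => euclNorm (D t *ᵥ h t)) volume a b :=
    (hh.euclNorm_mulVec hD).intervalIntegrable_of_Icc hab
  rw [← intervalIntegral.integral_add (integrable hf) (integrable hg)]
  refine intervalIntegral.integral_mono_on hab (integrable (hf.add hg))
    ((integrable hf).add (integrable hg)) fun t _ => ?_
  rw [Matrix.mulVec_add]
  exact euclNorm_add_le _ _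

end MatrixFunction

theorem stmt13_general (n l : ℕ) (τ θ : ℝ) (hτθ : τ < θ)
    (D : ℝ → Matrix (Fin n) (Fin l) ℝ)
    (hD : ∀ i j, ContinuousOn (fun t => D t i j) (Set.Icc τ θ))
    (Ψ : (ℝ → Fin l → ℝ) → (Fin n → ℝ))
    (hΨadd : ∀ f g : ℝ → Fin l → ℝ, Ψ (fun t => f t + g t) = Ψ f + Ψ g)
    (CΨ : ℝ) (hCΨ : 0 < CΨ)
    (hΨbound : ∀ q : ℝ → Fin l → ℝ, ContinuousOn q (Set.Icc τ θ) →
      euclNorm (Ψ q) ≤ CΨ * intNorm τ θ q)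
    (CD : ℝ) (hCD : 0 < CD)
    (hDbound : ∀ q : ℝ → Fin l → ℝ, ContinuousOn q (Set.Icc τ θ) →
      (∫ t in τ..θ, euclNorm ((D t).mulVec (q t))) ≤ CD * intNorm τ θ q)
    (Δp q : ℝ → Fin l → ℝ)
    (hΔpc : ContinuousOn Δp (Set.Icc τ θ)) (hqc : ContinuousOn q (Set.Icc τ θ))
    (β : ℝ) (hβ : 0 < β)
    (hΨΔp : euclNorm (Ψ Δp) ≥ β * ∫ t in τ..θ, euclNorm ((D t).mulVec (Δp t)))
    (hq1 : intNorm τ θ q ≤ β * (∫ t in τ..θ, euclNorm ((D t).mulVec (Δp t))) / (2 * CΨ))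
    (hq2 : intNorm τ θ q ≤ (∫ t in τ..θ, euclNorm ((D t).mulVec (Δp t))) / CD) :
    euclNorm (Ψ (fun t => Δp t + q t)) ≥
      (β / 4) * ∫ t in τ..θ, euclNorm ((D t).mulVec (Δp t + q t)) := by
  set A := ∫ t in τ..θ, euclNorm (D t *ᵥ Δp t)
  have hΨq : euclNorm (Ψ q) ≤ β * A / 2 := by
    have := (le_div_iff₀ (by positivity)).1 hq1
    linarith [hΨbound q hqc]
  have hΨsum : β * A / 2 ≤ euclNorm (Ψ fun t => Δp t + q t) := by
    rw [hΨadd]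
    linarith [euclNorm_le_euclNorm_add_add (Ψ Δp) (Ψ q)]
  have hDq : ∫ t in τ..θ, euclNorm (D t *ᵥ q t) ≤ A := by
    have := (le_div_iff₀ hCD).1 hq2
    linarith [hDbound q hqc]
  have hDsum : ∫ t in τ..θ, euclNorm (D t *ᵥ (Δp t + q t)) ≤ 2 * A := by
    linarith [integral_euclNorm_mulVec_add_le hτθ.le hD hΔpc hqc]
  linarith [mul_le_mul_of_nonneg_left hDsum hβ.le]

theorem stmt13 (n l : ℕ) (τ θ : ℝ) (hτθ : τ < θ)
    (D : ℝ → Matrix (Fin n) (Fin l) ℝ)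
    (hD : ∀ i j, ContinuousOn (fun t => D t i j) (Set.Icc τ θ))
    (Ψ : (ℝ → Fin l → ℝ) → (Fin n → ℝ))
    (hΨadd : ∀ f g : ℝ → Fin l → ℝ, Ψ (fun t => f t + g t) = Ψ f + Ψ g)
    (hΨsmul : ∀ (c : ℝ) (f : ℝ → Fin l → ℝ), Ψ (fun t => c • f t) = c • Ψ f)
    (CΨ : ℝ) (hCΨ : 0 < CΨ)
    (hΨbound : ∀ q : ℝ → Fin l → ℝ, ContinuousOn q (Set.Icc τ θ) →
      euclNorm (Ψ q) ≤ CΨ * intNorm τ θ q)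
    (CD : ℝ) (hCD : 0 < CD)
    (hDbound : ∀ q : ℝ → Fin l → ℝ, ContinuousOn q (Set.Icc τ θ) →
      (∫ t in τ..θ, euclNorm ((D t).mulVec (q t))) ≤ CD * intNorm τ θ q)
    (Δp q : ℝ → Fin l → ℝ)
    (hΔpc : ContinuousOn Δp (Set.Icc τ θ)) (hqc : ContinuousOn q (Set.Icc τ θ))
    (β : ℝ) (hβ : 0 < β)
    (hΨΔp : euclNorm (Ψ Δp) ≥ β * ∫ t in τ..θ, euclNorm ((D t).mulVec (Δp t)))
    (hq1 : intNorm τ θ q ≤ β * (∫ t in τ..θ, euclNorm ((D t).mulVec (Δp t))) / (2 * CΨ))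
    (hq2 : intNorm τ θ q ≤ (∫ t in τ..θ, euclNorm ((D t).mulVec (Δp t))) / CD) :
    euclNorm (Ψ (fun t => Δp t + q t)) ≥
      (β / 4) * ∫ t in τ..θ, euclNorm ((D t).mulVec (Δp t + q t)) :=
  stmt13_general n l τ θ hτθ D hD Ψ hΨadd CΨ hCΨ hΨbound CD hCD hDbound Δp q hΔpc hqc β hβ hΨΔp hq1
    hq2
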